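/- Let Φ be an index map of exponential type-(b) and (X, E^{(b)}) the associated AI_b-graph with hyperbolic boundary (∂X, θ_a). Then the canonical map κ : ∂X → K to the attractor K is a well-defined bijection, and is a Hölder equivalence with exponent b/a: there is C ≥ 1 such that C^{-1} θ_a(ξ,η) ≤ ρ(κ(ξ),κ(η))^{a/b} ≤ C θ_a(ξ,η) for all ξ,η ∈ ∂X. -/

import Mathlib

open SimpleGraph Metric
open scoped ENNReal ENat

noncomputable section

/-- A locally finite connected graph with a distinguished root. -/
structure RootedGraph (X : Type*) where
  G : SimpleGraph X
  root : X
  conn : G.Connected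
  locFin : ∀ x : X, {y | G.Adj x y}.Finite

namespace RootedGraph

variable {X : Type*} (R : RootedGraph X)

/-- The level `|x| = d(ϑ,x)` of a vertex. -/
def level (x : X) : ℕ := R.G.dist R.root x

/-- The horizontal subgraph: edges joining vertices of equal level. -/
def Gh : SimpleGraph X where
  Adj x y := R.G.Adj x y ∧ R.level x = R.level y
  symm := ⟨fun _ _ h => ⟨h.1.symm, h.2.symm⟩⟩
  loopless := ⟨fun x h => R.G.loopless.irrefl x h.1⟩

/-- The horizontal distance `d_h`, valued in `ℕ∞`. -/
def dh (x y : X) : ℕ∞ := R.Gh.edist x y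

/-- The `m`-th descendant set `J_m(x)`: vertices `y` with `|y| = |x| + m` lying
below `x` (i.e. `x` lies on a geodesic from the root to `y`). -/
def J (m : ℕ) (x : X) : Set X :=
  {y | R.level y = R.level x + m ∧ R.G.dist x y = m}

/-- `(m,k)`-departing property. -/
def Departing (m k : ℕ) : Prop :=
  ∀ x y : X, R.level x = R.level y → (k : ℕ∞) < R.dh x y →
    ∀ u ∈ R.J m x, ∀ v ∈ R.J m y, ((2 * k : ℕ) : ℕ∞) < R.dh u v

/-- Expansive property. -/
def Expansive : Prop :=
  ∀ x y : X, R.level x = R.level y → (1 : ℕ∞) < R.dh x y →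
    ∀ u ∈ R.J 1 x, ∀ v ∈ R.J 1 y, (1 : ℕ∞) < R.dh u v

/-- The Gromov product `(x|y)` with base point the root. -/
def gp (x y : X) : ℝ := ((R.level x : ℝ) + R.level y - R.G.dist x y) / 2

/-- Gromov hyperbolicity with respect to the root base point. -/
def Hyperbolic : Prop :=
  ∃ δ : ℝ, 0 ≤ δ ∧ ∀ x y z : X, min (R.gp x z) (R.gp z y) - δ ≤ R.gp x y

/-- A geodesic ray from the root. -/
def IsRay (f : ℕ → X) : Prop := f 0 = R.root ∧ ∀ i, f (i + 1) ∈ R.J 1 (f i)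

/-- The Gromov product of two rays: the (increasing) limit of `(x_i|y_i)`. -/
def gpRay (f g : ℕ → X) : ℝ≥0∞ := ⨆ i, ENNReal.ofReal (R.gp (f i) (g i))

/-- `|x ∨ y|_k = sup{ i : d_h(x_i,y_i) ≤ k }`. -/
def joinK (k : ℕ) (f g : ℕ → X) : ℝ≥0∞ :=
  ⨆ (i : ℕ) (_ : R.dh (f i) (g i) ≤ (k : ℕ∞)), (i : ℝ≥0∞)

/-- The Gromov product on a model `B` of the hyperbolic boundary, defined as the
supremum over pairs of converging rays. -/
def gpB {B : Type*} (lim : (ℕ → X) → B) (ξ η : B) : ℝ≥0∞ :=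
  ⨆ (f : ℕ → X) (g : ℕ → X)
    (_ : R.IsRay f ∧ R.IsRay g ∧ lim f = ξ ∧ lim g = η), R.gpRay f g

/-- `B` together with `lim` is a model of the hyperbolic boundary: every point is the
limit of a ray, and two rays have the same limit iff they are equivalent. -/
def BoundaryOf {B : Type*} (lim : (ℕ → X) → B) : Prop :=
  (∀ ξ : B, ∃ f, R.IsRay f ∧ lim f = ξ) ∧
    ∀ f g, R.IsRay f → R.IsRay g → (lim f = lim g ↔ R.gpRay f g = ⊤)

/-- The metric on the boundary model is a Gromov metric:
`θ_a(ξ,η) ≍ e^{-a(ξ|η)}`. -/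
def GromovLike {B : Type*} [MetricSpace B] (lim : (ℕ → X) → B) (a c₁ c₂ : ℝ) : Prop :=
  ∀ ξ η : B, ξ ≠ η →
    c₁ * Real.exp (-a * (R.gpB lim ξ η).toReal) ≤ dist ξ η ∧
      dist ξ η ≤ c₂ * Real.exp (-a * (R.gpB lim ξ η).toReal)

/-- The boundary cell `J_∂(x)`: boundary points reachable by rays through `x`. -/
def cell {B : Type*} (lim : (ℕ → X) → B) (x : X) : Set B :=
  {ξ | ∃ f, R.IsRay f ∧ f (R.level x) = x ∧ lim f = ξ}

/-- The `k`-shadow `J^k_∂(x)`. -/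
def shadow {B : Type*} (lim : (ℕ → X) → B) (k : ℕ) (x : X) : Set B :=
  ⋃ y ∈ {y | R.level y = R.level x ∧ R.dh x y ≤ (k : ℕ∞)}, R.cell lim y

/-- Bounded degree. -/
def BddDeg : Prop := ∃ D : ℕ, ∀ x : X, Set.ncard {y | R.G.Adj x y} ≤ D

/-- A vertical rooted graph: all edges join adjacent levels. -/
def Vertical : Prop :=
  ∀ x y : X, R.G.Adj x y → R.level x = R.level y + 1 ∨ R.level y = R.level x + 1

/-- An index map on `(X,E_v)` over `M`. -/
def IsIndexMap {M : Type*} [MetricSpace M] (Φ : X → Set M) : Prop :=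
  (∀ x, IsCompact (Φ x)) ∧ (∀ x, (Φ x).Nonempty) ∧
    (∀ x y, y ∈ R.J 1 x → Φ y ⊆ Φ x) ∧
    (∀ f, R.IsRay f → ∃ p, (⋂ i, Φ (f i)) = {p})

/-- The attractor of an index map. -/
def attractor {M : Type*} [MetricSpace M] (Φ : X → Set M) : Set M :=
  ⋂ n : ℕ, ⋃ x ∈ {x | R.level x = n}, Φ x

/-- Exponential type-(b): `diam Φ(x) ≤ δ₀ e^{-b|x|}`. -/
def ExpType {M : Type*} [MetricSpace M] (Φ : X → Set M) (b δ₀ : ℝ) : Prop :=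
  ∀ x, EMetric.diam (Φ x) ≤ ENNReal.ofReal (δ₀ * Real.exp (-b * R.level x))

/-- Condition `(S_b)`. -/
def CondS {M : Type*} [MetricSpace M] (Φ : X → Set M) (b : ℝ) : Prop :=
  ∀ c : ℝ, 0 < c → ∃ ℓ : ℕ, ∀ (n : ℕ) (F : Set M),
    EMetric.diam F < ENNReal.ofReal (c * Real.exp (-b * n)) →
      Set.ncard {x | R.level x = n ∧ ((Φ x ∩ R.attractor Φ) ∩ F).Nonempty} ≤ ℓ

end RootedGraph

/-- Distance between two subsets of a metric space. -/
def setDist {M : Type*} [MetricSpace M] (s t : Set M) : ℝ :=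
  sInf ((fun p : M × M => dist p.1 p.2) '' s ×ˢ t)

/-- The AI_b-graph on `X` associated to an index map `Φ`:
same root, same vertical edges, and horizontal edges between distinct equal-level
vertices whose index sets are `γe^{-bn}`-close. -/
def RootedGraph.IsAIb {X M : Type*} [MetricSpace M] (R R' : RootedGraph X)
    (Φ : X → Set M) (b γ : ℝ) : Prop :=
  R'.root = R.root ∧ ∀ x y : X, R'.G.Adj x y ↔
    (R.G.Adj x y ∨ (R.level x = R.level y ∧ x ≠ y ∧
      setDist (Φ x) (Φ y) ≤ γ * Real.exp (-b * R.level x)))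

/-- The AI_∞-graph on `X` associated to an index map `Φ`. -/
def RootedGraph.IsAIinf {X M : Type*} [MetricSpace M] (R R' : RootedGraph X)
    (Φ : X → Set M) : Prop :=
  R'.root = R.root ∧ ∀ x y : X, R'.G.Adj x y ↔
    (R.G.Adj x y ∨ (R.level x = R.level y ∧ x ≠ y ∧ (Φ x ∩ Φ y).Nonempty))

end

/-!
Every edge of the AI_b-graph changes the level by at most one and joins vertices whose index
sets are `(δ₀ + γ)e^{-bn}`-close, so following a walk of length `L` from a vertex of level `n`
moves a point of `M` by a geometric sum `≲ e^{-b(n - L)}`. Splitting a geodesic between two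
vertices of level `n` at its midpoint gives `ρ(Φ x, Φ y) ≲ e^{-b(x|y)}`. Conversely, two vertices
of level `n` whose index sets are `γe^{-bn}`-close are equal or adjacent, so `(x|y) ≥ n - 1/2`.
These two estimates make `κ` well defined and injective and give `ρ(κξ, κη) ≍ e^{-b(ξ|η)}`;
comparing with `θ_a(ξ, η) ≍ e^{-a(ξ|η)}` yields the Hölder equivalence. Surjectivity onto the
attractor is König's lemma.
-/

open Real

section RealEstimates

lemma le_mul_exp_neg_iff {b C d t : ℝ} (hb : 0 < b) (hd : 0 < d) (hC : 0 < C) :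
    d ≤ C * exp (-b * t) ↔ t ≤ log (C / d) / b := by
  rw [le_div_iff₀ hb, mul_comm t, le_log_iff_exp_le (div_pos hC hd), le_div_iff₀ hd, neg_mul,
    exp_neg, ← div_eq_mul_inv, le_div_iff₀ (exp_pos _), mul_comm]

lemma mul_exp_neg_le_of_forall_nat {b γ d T : ℝ} (hb : 0 < b) (hγ : 0 ≤ γ) (hT : 0 ≤ T)
    (h : ∀ n : ℕ, d ≤ γ * exp (-b * n) → (n : ℝ) - 1 / 2 ≤ T) :
    γ * exp (-(3 * b / 2)) * exp (-b * T) ≤ d := by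
  by_contra! hlt
  set n := ⌊T + 3 / 2⌋₊
  have hn_le : (n : ℝ) ≤ T + 3 / 2 := Nat.floor_le (by linarith)
  have hn_gt : T + 1 / 2 < n := by linarith [Nat.lt_floor_add_one (T + 3 / 2)]
  refine absurd (h n (hlt.le.trans ?_)) (by linarith)
  rw [mul_assoc, ← exp_add]
  gcongr
  nlinarith

lemma rpow_mul_exp_neg {a b c T : ℝ} (hb : b ≠ 0) (hc : 0 ≤ c) :
    (c * exp (-b * T)) ^ (a / b) = c ^ (a / b) * exp (-a * T) := by
  rw [mul_rpow hc (exp_pos _).le, ← exp_mul]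
  congr 2
  field_simp

lemma le_rpow_and_rpow_le_of_exp_bounds {a b c C c₁ c₂ d θ T : ℝ} (ha : 0 ≤ a) (hb : 0 < b)
    (hc : 0 < c) (hC : 0 ≤ C) (hc₁ : 0 < c₁) (hc₂ : 0 ≤ c₂)
    (hd_ge : c * exp (-b * T) ≤ d) (hd_le : d ≤ C * exp (-b * T))
    (hθ_ge : c₁ * exp (-a * T) ≤ θ) (hθ_le : θ ≤ c₂ * exp (-a * T)) :
    θ ≤ c₂ / c ^ (a / b) * d ^ (a / b) ∧ d ^ (a / b) ≤ C ^ (a / b) / c₁ * θ := by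
  have hab : 0 ≤ a / b := div_nonneg ha hb.le
  have hcd : c ^ (a / b) * exp (-a * T) ≤ d ^ (a / b) :=
    rpow_mul_exp_neg hb.ne' hc.le ▸ rpow_le_rpow (by positivity) hd_ge hab
  have hdC : d ^ (a / b) ≤ C ^ (a / b) * exp (-a * T) :=
    rpow_mul_exp_neg hb.ne' hC ▸ rpow_le_rpow (hd_ge.trans' (by positivity)) hd_le hab
  constructor
  · calc θ ≤ c₂ * exp (-a * T) := hθ_le
      _ = c₂ / c ^ (a / b) * (c ^ (a / b) * exp (-a * T)) := by field_simp
      _ ≤ c₂ / c ^ (a / b) * d ^ (a / b) := by gcongr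
  · calc d ^ (a / b) ≤ C ^ (a / b) * exp (-a * T) := hdC
      _ = C ^ (a / b) / c₁ * (c₁ * exp (-a * T)) := by field_simp
      _ ≤ C ^ (a / b) / c₁ * θ := by gcongr

end RealEstimates

section SetDist

variable {M : Type*} [MetricSpace M] {s t : Set M}

lemma setDist_le_dist {p q : M} (hp : p ∈ s) (hq : q ∈ t) : setDist s t ≤ dist p q :=
  csInf_le ⟨0, by rintro _ ⟨_, -, rfl⟩; exact dist_nonneg⟩ ⟨(p, q), ⟨hp, hq⟩, rfl⟩

lemma IsCompact.exists_dist_eq_setDist (hs : IsCompact s) (ht : IsCompact t)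
    (hs' : s.Nonempty) (ht' : t.Nonempty) : ∃ p ∈ s, ∃ q ∈ t, dist p q = setDist s t := by
  obtain ⟨⟨p, q⟩, hpq, h⟩ :=
    ((hs.prod ht).image continuous_dist).sInf_mem ((hs'.prod ht').image _)
  exact ⟨p, hpq.1, q, hpq.2, h⟩

end SetDist

lemma mem_of_iInter_eq_singleton {ι α : Type*} {s : ι → Set α} {p : α} (h : ⋂ i, s i = {p})
    (i : ι) : p ∈ s i :=
  Set.iInter_subset s i (h ▸ rfl)


namespace RootedGraph

section Levels

variable {X : Type*} (R : RootedGraph X)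

@[simp]
lemma level_root : R.level R.root = 0 := by
  simp [level]

lemma level_le_level_add_dist (u v : X) : R.level v ≤ R.level u + R.G.dist u v :=
  R.conn.dist_triangle

lemma level_le_level_add_one_of_adj {u v : X} (h : R.G.Adj u v) :
    R.level v ≤ R.level u + 1 := by
  simpa [SimpleGraph.dist_eq_one_iff_adj.mpr h] using R.level_le_level_add_dist u v

lemma gp_self (x : X) : R.gp x x = R.level x := by
  simp [gp]

lemma finite_J_one (x : X) : (R.J 1 x).Finite :=
  (R.locFin x).subset fun _ hy => SimpleGraph.dist_eq_one_iff_adj.mp hy.2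

variable {R}

lemma IsRay.level_eq {f : ℕ → X} (hf : R.IsRay f) (i : ℕ) : R.level (f i) = i := by
  induction i with
  | zero => simp [hf.1]
  | succ i ih => rw [(hf.2 i).1, ih]

lemma mem_J_root_iff {m : ℕ} {x : X} : x ∈ R.J m R.root ↔ R.level x = m := by
  simp [J, level]

lemma exists_mem_J_one_of_mem_J_succ {m : ℕ} {x z : X} (hz : z ∈ R.J (m + 1) x) :
    ∃ y ∈ R.J 1 x, z ∈ R.J m y := by
  obtain ⟨hlev, hdist⟩ := hz
  obtain ⟨w, hw⟩ := R.conn.exists_walk_length_eq_dist x z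
  cases w with
  | nil => simp at hdist
  | @cons _ y _ hadj w =>
    have hxy : R.G.dist x y = 1 := SimpleGraph.dist_eq_one_iff_adj.mpr hadj
    have hly := R.level_le_level_add_one_of_adj hadj
    have hlz := R.level_le_level_add_dist y z
    have hyz := SimpleGraph.dist_le w
    have hxz := R.conn.dist_triangle (u := x) (v := y) (w := z)
    simp only [SimpleGraph.Walk.length_cons] at hw
    exact ⟨y, ⟨by omega, hxy⟩, by omega, by omega⟩

lemma exists_mem_J_one_infinite {Q : X → Prop} {x : X}
    (hx : {m | ∃ z ∈ R.J m x, Q z}.Infinite) :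
    ∃ y ∈ R.J 1 x, {m | ∃ z ∈ R.J m y, Q z}.Infinite := by
  -- a depth `m + 1` below `x` is a depth `m` below one of its finitely many children
  by_contra! h
  refine hx ((((R.finite_J_one x).biUnion h).image (· + 1)).insert 0 |>.subset ?_)
  rintro (_ | m) ⟨z, hz, hQ⟩
  · exact Set.mem_insert _ _
  · obtain ⟨y, hy, hzy⟩ := exists_mem_J_one_of_mem_J_succ hz
    exact Set.mem_insert_of_mem _ ⟨m, Set.mem_biUnion hy ⟨z, hzy, hQ⟩, rfl⟩

lemma exists_isRay_forall {P : X → Prop} (hroot : P R.root)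
    (hstep : ∀ x, P x → ∃ y ∈ R.J 1 x, P y) : ∃ f, R.IsRay f ∧ ∀ i, P (f i) := by
  choose! next hnext hP using hstep
  have hf : ∀ i, P (next^[i] R.root) := by
    intro i
    induction i with
    | zero => exact hroot
    | succ i ih => rw [Function.iterate_succ_apply']; exact hP _ ih
  refine ⟨fun i => next^[i] R.root, ⟨rfl, fun i => ?_⟩, hf⟩
  simpa only [Function.iterate_succ_apply'] using hnext _ (hf i)

end Levels

section IndexMap

variable {X M : Type*} [MetricSpace M] {R : RootedGraph X} {Φ : X → Set M}

lemma IsIndexMap.subset_of_mem_J (hΦ : R.IsIndexMap Φ) {m : ℕ} :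
    ∀ {x z : X}, z ∈ R.J m x → Φ z ⊆ Φ x := by
  induction m with
  | zero => intro x z hz; rw [R.conn.dist_eq_zero_iff.mp hz.2]
  | succ m ih =>
    intro x z hz
    obtain ⟨y, hy, hzy⟩ := exists_mem_J_one_of_mem_J_succ hz
    exact (ih hzy).trans (hΦ.2.2.1 x y hy)

lemma IsIndexMap.exists_isRay_forall_mem (hΦ : R.IsIndexMap Φ) {p : M}
    (hp : p ∈ R.attractor Φ) : ∃ f, R.IsRay f ∧ ∀ i, p ∈ Φ (f i) := by
  have hroot : {m | ∃ z ∈ R.J m R.root, p ∈ Φ z} = Set.univ := by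
    refine Set.eq_univ_of_forall fun m => ?_
    obtain ⟨x, hx, hpx⟩ := Set.mem_iUnion₂.mp (Set.mem_iInter.mp hp m)
    exact ⟨x, mem_J_root_iff.mpr hx, hpx⟩
  obtain ⟨f, hf, hinf⟩ := R.exists_isRay_forall (hroot ▸ Set.infinite_univ)
    fun _ => exists_mem_J_one_infinite (Q := (p ∈ Φ ·))
  refine ⟨f, hf, fun i => ?_⟩
  obtain ⟨m, z, hz, hpz⟩ := (hinf i).nonempty
  exact hΦ.subset_of_mem_J hz hpz

lemma ExpType.dist_le {b δ₀ : ℝ} (hexp : R.ExpType Φ b δ₀) (hδ₀ : 0 ≤ δ₀) {x : X} {p q : M}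
    (hp : p ∈ Φ x) (hq : q ∈ Φ x) : dist p q ≤ δ₀ * exp (-b * R.level x) := by
  rw [dist_edist]
  exact ENNReal.toReal_le_of_le_ofReal (by positivity)
    ((Metric.edist_le_ediam_of_mem hp hq).trans (hexp x))

end IndexMap

end RootedGraph

namespace RootedGraph.IsAIb

variable {X M : Type*} [MetricSpace M] {R R' : RootedGraph X} {Φ : X → Set M} {b γ δ₀ : ℝ}

lemma le (hA : R.IsAIb R' Φ b γ) : R.G ≤ R'.G :=
  fun x y h => (hA.2 x y).mpr (Or.inl h)

lemma level_le_level_add_one_of_adj (hA : R.IsAIb R' Φ b γ) {u v : X} (h : R'.G.Adj u v) :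
    R.level v ≤ R.level u + 1 := by
  rcases (hA.2 u v).mp h with h | ⟨h, -⟩
  · exact R.level_le_level_add_one_of_adj h
  · omega

lemma level_le_level_add_length (hA : R.IsAIb R' Φ b γ) {u v : X} (w : R'.G.Walk u v) :
    R.level v ≤ R.level u + w.length := by
  induction w with
  | nil => simp
  | cons h w ih =>
    have := hA.level_le_level_add_one_of_adj h
    simp only [SimpleGraph.Walk.length_cons]
    omega

lemma level_eq (hA : R.IsAIb R' Φ b γ) (x : X) : R'.level x = R.level x := by
  obtain ⟨w, hw⟩ := R'.conn.exists_walk_length_eq_dist R'.root x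
  have h₁ := hA.level_le_level_add_length w
  have h₂ := (R.conn R.root x).dist_anti hA.le
  simp only [hA.1, level_root, zero_add] at h₁ hw
  simp only [level, hA.1] at h₁ ⊢
  omega

lemma J_one_eq (hA : R.IsAIb R' Φ b γ) (x : X) : R'.J 1 x = R.J 1 x := by
  ext y
  simp only [J, Set.mem_ofPred_eq, hA.level_eq, SimpleGraph.dist_eq_one_iff_adj]
  refine and_congr_right fun hlev => (hA.2 x y).trans (or_iff_left ?_)
  rintro ⟨h, -⟩
  omega

lemma isRay_iff (hA : R.IsAIb R' Φ b γ) {f : ℕ → X} : R'.IsRay f ↔ R.IsRay f := by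
  simp only [IsRay, hA.1, hA.J_one_eq]

lemma isIndexMap (hA : R.IsAIb R' Φ b γ) (hΦ : R.IsIndexMap Φ) : R'.IsIndexMap Φ :=
  ⟨hΦ.1, hΦ.2.1, fun x y hy => hΦ.2.2.1 x y (hA.J_one_eq x ▸ hy),
    fun f hf => hΦ.2.2.2 f (hA.isRay_iff.mp hf)⟩

lemma attractor_eq (hA : R.IsAIb R' Φ b γ) : R'.attractor Φ = R.attractor Φ := by
  simp only [attractor, hA.level_eq]

lemma exists_dist_le_of_adj (hA : R.IsAIb R' Φ b γ) (hvert : R.Vertical) (hΦ : R.IsIndexMap Φ)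
    (hγ : 0 ≤ γ) {x v : X} (h : R'.G.Adj x v) :
    ∃ p ∈ Φ x, ∃ r ∈ Φ v, dist p r ≤ γ * exp (-b * R.level x) := by
  rcases (hA.2 x v).mp h with h | ⟨-, -, hd⟩
  · -- a vertical edge joins a vertex to its parent, whose index set contains the child's
    have hsub : Φ x ⊆ Φ v ∨ Φ v ⊆ Φ x := (hvert x v h).imp
      (fun hl => hΦ.2.2.1 v x ⟨hl, SimpleGraph.dist_eq_one_iff_adj.mpr h.symm⟩)
      (fun hl => hΦ.2.2.1 x v ⟨hl, SimpleGraph.dist_eq_one_iff_adj.mpr h⟩)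
    rcases hsub with hsub | hsub
    · obtain ⟨p, hp⟩ := hΦ.2.1 x
      exact ⟨p, hp, p, hsub hp, by rw [_root_.dist_self]; positivity⟩
    · obtain ⟨r, hr⟩ := hΦ.2.1 v
      exact ⟨r, hsub hr, r, hr, by rw [_root_.dist_self]; positivity⟩
  · obtain ⟨p, hp, r, hr, h⟩ :=
      (hΦ.1 x).exists_dist_eq_setDist (hΦ.1 v) (hΦ.2.1 x) (hΦ.2.1 v)
    exact ⟨p, hp, r, hr, h ▸ hd⟩

lemma dist_le_geom_sum_of_walk (hA : R.IsAIb R' Φ b γ) (hvert : R.Vertical) (hΦ : R.IsIndexMap Φ)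
    (hexp : R.ExpType Φ b δ₀) (hb : 0 ≤ b) (hδ₀ : 0 ≤ δ₀) (hγ : 0 ≤ γ)
    {x y : X} (w : R'.G.Walk x y) {p q : M} (hp : p ∈ Φ x) (hq : q ∈ Φ y) :
    dist p q ≤ (δ₀ + γ) * exp (-b * R.level x) * ∑ t ∈ Finset.range (w.length + 1), exp b ^ t := by
  induction w generalizing p with
  | nil =>
    simpa using (hexp.dist_le hδ₀ hp hq).trans
      (mul_le_mul_of_nonneg_right (by linarith) (exp_pos _).le)
  | @cons x v y h w ih =>
    obtain ⟨p₀, hp₀, r, hr, hp₀r⟩ := hA.exists_dist_le_of_adj hvert hΦ hγ h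
    have hlev : exp (-b * R.level v) ≤ exp (-b * R.level x) * exp b := by
      rw [← exp_add]
      have : (R.level x : ℝ) ≤ R.level v + 1 := by
        exact_mod_cast hA.level_le_level_add_one_of_adj h.symm
      gcongr
      nlinarith
    calc dist p q ≤ dist p p₀ + dist p₀ r + dist r q := dist_triangle4 _ _ _ _
      _ ≤ δ₀ * exp (-b * R.level x) + γ * exp (-b * R.level x) +
          (δ₀ + γ) * (exp (-b * R.level x) * exp b) *
            ∑ t ∈ Finset.range (w.length + 1), exp b ^ t := by
        gcongr
        · exact hexp.dist_le hδ₀ hp hp₀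
        · exact (ih hr hq).trans (by gcongr)
      _ = (δ₀ + γ) * exp (-b * R.level x) *
            ∑ t ∈ Finset.range ((SimpleGraph.Walk.cons h w).length + 1), exp b ^ t := by
        rw [SimpleGraph.Walk.length_cons, geom_sum_succ (n := w.length + 1)]
        ring

lemma dist_le_mul_exp_of_walk (hA : R.IsAIb R' Φ b γ) (hvert : R.Vertical)
    (hΦ : R.IsIndexMap Φ) (hexp : R.ExpType Φ b δ₀) (hb : 0 < b) (hδ₀ : 0 ≤ δ₀) (hγ : 0 ≤ γ)
    {x y : X} (w : R'.G.Walk x y) {p q : M} (hp : p ∈ Φ x) (hq : q ∈ Φ y) :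
    dist p q ≤ (δ₀ + γ) * (exp b / (exp b - 1)) * exp (b * (w.length - R.level x)) := by
  have hexp_b : 1 < exp b := one_lt_exp_iff.mpr hb
  calc dist p q
      ≤ (δ₀ + γ) * exp (-b * R.level x) * ∑ t ∈ Finset.range (w.length + 1), exp b ^ t :=
        hA.dist_le_geom_sum_of_walk hvert hΦ hexp hb.le hδ₀ hγ w hp hq
    _ ≤ (δ₀ + γ) * exp (-b * R.level x) * (exp b ^ (w.length + 1) / (exp b - 1)) := by
        refine mul_le_mul_of_nonneg_left ?_ (mul_nonneg (by linarith) (exp_pos _).le)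
        rw [geom_sum_eq hexp_b.ne']
        exact div_le_div_of_nonneg_right (by linarith) (by linarith)
    _ = (δ₀ + γ) * (exp b / (exp b - 1)) * exp (b * (w.length - R.level x)) := by
        have : exp (-b * R.level x) * exp b ^ (w.length + 1) =
            exp b * exp (b * (w.length - R.level x)) := by
          rw [← exp_nat_mul, ← exp_add, ← exp_add]
          push_cast
          ring_nf
        simp only [div_eq_mul_inv]
        linear_combination (δ₀ + γ) * (exp b - 1)⁻¹ * this

lemma exists_dist_le_mul_exp_neg_gp (hA : R.IsAIb R' Φ b γ) (hvert : R.Vertical)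
    (hΦ : R.IsIndexMap Φ) (hexp : R.ExpType Φ b δ₀) (hb : 0 < b) (hδ₀ : 0 ≤ δ₀) (hγ : 0 < γ) :
    ∃ C > 0, ∀ x y, R'.level x = R'.level y → ∀ p ∈ Φ x, ∀ q ∈ Φ y,
      dist p q ≤ C * exp (-b * R'.gp x y) := by
  have hexp_b : 1 < exp b := one_lt_exp_iff.mpr hb
  set K := (δ₀ + γ) * (exp b / (exp b - 1))
  have hK : 0 < K := mul_pos (by linarith) (div_pos (exp_pos b) (by linarith))
  refine ⟨2 * K * exp (b / 2), by positivity, fun x y hxy p hp q hq => ?_⟩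
  obtain ⟨w, hw⟩ := R'.conn.exists_walk_length_eq_dist x y
  set k := (w.length + 1) / 2
  obtain ⟨r, hr⟩ := hΦ.2.1 (w.getVert k)
  have hhalf : ∀ {z} (v : R'.G.Walk z (w.getVert k)), v.length ≤ k → R.level z = R.level x →
      ∀ {p}, p ∈ Φ z → dist p r ≤ K * exp (b * ((w.length + 1) / 2 - R.level x)) := by
    intro z v hv hz p hp
    refine (hA.dist_le_mul_exp_of_walk hvert hΦ hexp hb hδ₀ hγ.le v hp hr).trans ?_
    have : (v.length : ℝ) * 2 ≤ w.length + 1 := by exact_mod_cast (by omega : v.length * 2 ≤ _)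
    rw [hz]
    gcongr
    linarith
  have hgp : R'.gp x y = R.level x - w.length / 2 := by
    rw [gp, ← hxy, hA.level_eq, hw]
    ring
  calc dist p q ≤ dist p r + dist q r := dist_triangle_right _ _ _
    _ ≤ K * exp (b * ((w.length + 1) / 2 - R.level x)) +
        K * exp (b * ((w.length + 1) / 2 - R.level x)) := by
      gcongr
      · exact hhalf (w.take k) (by simp) rfl hp
      · exact hhalf (w.drop k).reverse (by simp; omega)
          (by rw [← hA.level_eq, ← hxy, hA.level_eq]) hq
    _ = 2 * K * exp (b / 2) * exp (-b * R'.gp x y) := by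
      rw [hgp, mul_assoc (2 * K), ← exp_add]
      ring_nf

lemma le_gp_of_dist_le (hA : R.IsAIb R' Φ b γ) (x y : X) (hxy : R'.level x = R'.level y)
    (p : M) (hp : p ∈ Φ x) (q : M) (hq : q ∈ Φ y) (hpq : dist p q ≤ γ * exp (-b * R'.level x)) :
    R'.level x - 1 / 2 ≤ R'.gp x y := by
  have hdist : R'.G.dist x y ≤ 1 := by
    rcases eq_or_ne x y with rfl | hne
    · simp
    · refine (SimpleGraph.dist_eq_one_iff_adj.mpr ((hA.2 x y).mpr (Or.inr ?_))).le
      rw [← hA.level_eq, ← hA.level_eq]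
      exact ⟨hxy, hne, (setDist_le_dist hp hq).trans (hA.level_eq x ▸ hpq)⟩
  have : (R'.G.dist x y : ℝ) ≤ 1 := by exact_mod_cast hdist
  rw [gp, ← hxy]
  linarith

end RootedGraph.IsAIb

namespace RootedGraph

variable {X M B : Type*} [MetricSpace M] {R : RootedGraph X} {Φ : X → Set M} {b γ C : ℝ}
  {lim : (ℕ → X) → B} {κ : B → M}

lemma gpRay_eq_top_of_forall {f g : ℕ → X} (h : ∀ n : ℕ, (n : ℝ) - 1 / 2 ≤ R.gp (f n) (g n)) :
    R.gpRay f g = ⊤ := by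
  refine ENNReal.eq_top_of_forall_nnreal_le fun r => ?_
  obtain ⟨n, hn⟩ := exists_nat_gt ((r : ℝ) + 1 / 2)
  calc (r : ℝ≥0∞) = ENNReal.ofReal r := (ENNReal.ofReal_coe_nnreal).symm
    _ ≤ ENNReal.ofReal (R.gp (f n) (g n)) := ENNReal.ofReal_le_ofReal (by linarith [h n])
    _ ≤ R.gpRay f g := le_iSup (fun i => ENNReal.ofReal (R.gp (f i) (g i))) n

lemma gpRay_le_gpB {f g : ℕ → X} (hf : R.IsRay f) (hg : R.IsRay g) :
    R.gpRay f g ≤ R.gpB lim (lim f) (lim g) :=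
  le_iSup₂_of_le f g (le_iSup_of_le ⟨hf, hg, rfl, rfl⟩ le_rfl)

lemma gpRay_le_ofReal_log (hb : 0 < b) (hC₀ : 0 < C)
    (hC : ∀ x y, R.level x = R.level y → ∀ p ∈ Φ x, ∀ q ∈ Φ y,
      dist p q ≤ C * exp (-b * R.gp x y))
    {f g : ℕ → X} (hf : R.IsRay f) (hg : R.IsRay g) {p q : M} (hp : ∀ i, p ∈ Φ (f i))
    (hq : ∀ i, q ∈ Φ (g i)) (hpq : 0 < dist p q) :
    R.gpRay f g ≤ ENNReal.ofReal (log (C / dist p q) / b) :=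
  iSup_le fun i => ENNReal.ofReal_le_ofReal <| (le_mul_exp_neg_iff hb hpq hC₀).mp <|
    hC _ _ (by rw [hf.level_eq, hg.level_eq]) p (hp i) q (hq i)

lemma exists_forall_iInter_eq_singleton (hb : 0 < b) (hC₀ : 0 < C)
    (hC : ∀ x y, R.level x = R.level y → ∀ p ∈ Φ x, ∀ q ∈ Φ y,
      dist p q ≤ C * exp (-b * R.gp x y))
    (hΦ : R.IsIndexMap Φ) (hB : R.BoundaryOf lim) :
    ∃ κ : B → M, ∀ f, R.IsRay f → (⋂ i, Φ (f i)) = {κ (lim f)} := by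
  choose ray hray hlim using hB.1
  choose pt hpt using fun ξ => hΦ.2.2.2 (ray ξ) (hray ξ)
  refine ⟨pt, fun f hf => ?_⟩
  obtain ⟨p, hp⟩ := hΦ.2.2.2 f hf
  rw [hp, Set.singleton_eq_singleton_iff]
  by_contra hne
  have htop := (hB.2 f _ hf (hray _)).mp (hlim _).symm
  have := gpRay_le_ofReal_log hb hC₀ hC hf (hray _) (mem_of_iInter_eq_singleton hp)
    (mem_of_iInter_eq_singleton (hpt _)) (dist_pos.mpr hne)
  simp [htop] at this

lemma injective_of_forall_iInter_eq_singleton (hγ : 0 ≤ γ)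
    (hlow : ∀ x y, R.level x = R.level y → ∀ p ∈ Φ x, ∀ q ∈ Φ y,
      dist p q ≤ γ * exp (-b * R.level x) → R.level x - 1 / 2 ≤ R.gp x y)
    (hB : R.BoundaryOf lim) (hκ : ∀ f, R.IsRay f → (⋂ i, Φ (f i)) = {κ (lim f)}) :
    Function.Injective κ := by
  intro ξ η h
  obtain ⟨f, hf, rfl⟩ := hB.1 ξ
  obtain ⟨g, hg, rfl⟩ := hB.1 η
  refine (hB.2 f g hf hg).mpr (gpRay_eq_top_of_forall fun n => ?_)
  have := hlow (f n) (g n) (by rw [hf.level_eq, hg.level_eq])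
    _ (mem_of_iInter_eq_singleton (hκ f hf) n) _ (mem_of_iInter_eq_singleton (hκ g hg) n)
    (by rw [h, _root_.dist_self]; positivity)
  rwa [hf.level_eq] at this

lemma range_eq_attractor (hΦ : R.IsIndexMap Φ) (hB : R.BoundaryOf lim)
    (hκ : ∀ f, R.IsRay f → (⋂ i, Φ (f i)) = {κ (lim f)}) :
    Set.range κ = R.attractor Φ := by
  refine Set.Subset.antisymm ?_ fun p hp => ?_
  · rintro _ ⟨ξ, rfl⟩
    obtain ⟨f, hf, rfl⟩ := hB.1 ξ
    exact Set.mem_iInter.mpr fun n =>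
      Set.mem_biUnion (hf.level_eq n) (mem_of_iInter_eq_singleton (hκ f hf) n)
  · obtain ⟨f, hf, hpf⟩ := hΦ.exists_isRay_forall_mem hp
    have : p ∈ ⋂ i, Φ (f i) := Set.mem_iInter.mpr hpf
    rw [hκ f hf] at this
    exact ⟨lim f, this.symm⟩

lemma gpB_le_ofReal_log (hb : 0 < b) (hC₀ : 0 < C)
    (hC : ∀ x y, R.level x = R.level y → ∀ p ∈ Φ x, ∀ q ∈ Φ y,
      dist p q ≤ C * exp (-b * R.gp x y))
    (hκ : ∀ f, R.IsRay f → (⋂ i, Φ (f i)) = {κ (lim f)}) {ξ η : B}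
    (hd : 0 < dist (κ ξ) (κ η)) :
    R.gpB lim ξ η ≤ ENNReal.ofReal (log (C / dist (κ ξ) (κ η)) / b) := by
  refine iSup_le fun f => iSup_le fun g => iSup_le ?_
  rintro ⟨hf, hg, rfl, rfl⟩
  exact gpRay_le_ofReal_log hb hC₀ hC hf hg (mem_of_iInter_eq_singleton (hκ f hf))
    (mem_of_iInter_eq_singleton (hκ g hg)) hd

lemma dist_le_mul_exp_neg_gpB (hb : 0 < b) (hC₀ : 0 < C)
    (hC : ∀ x y, R.level x = R.level y → ∀ p ∈ Φ x, ∀ q ∈ Φ y,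
      dist p q ≤ C * exp (-b * R.gp x y))
    (hB : R.BoundaryOf lim) (hκ : ∀ f, R.IsRay f → (⋂ i, Φ (f i)) = {κ (lim f)}) (ξ η : B) :
    dist (κ ξ) (κ η) ≤ C * exp (-b * (R.gpB lim ξ η).toReal) := by
  rcases (dist_nonneg (x := κ ξ) (y := κ η)).eq_or_lt with hd | hd
  · rw [← hd]
    positivity
  refine (le_mul_exp_neg_iff hb hd hC₀).mpr
    (ENNReal.toReal_le_of_le_ofReal ?_ (gpB_le_ofReal_log hb hC₀ hC hκ hd))
  refine (le_mul_exp_neg_iff (t := 0) hb hd hC₀).mp ?_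
  obtain ⟨f, hf, rfl⟩ := hB.1 ξ
  obtain ⟨g, hg, rfl⟩ := hB.1 η
  have := hC (f 0) (g 0) (by rw [hf.level_eq, hg.level_eq])
    _ (mem_of_iInter_eq_singleton (hκ f hf) 0) _ (mem_of_iInter_eq_singleton (hκ g hg) 0)
  rwa [hf.1, hg.1, gp_self, level_root, Nat.cast_zero] at this

lemma mul_exp_neg_gpB_le_dist (hb : 0 < b) (hγ : 0 ≤ γ) (hC₀ : 0 < C)
    (hC : ∀ x y, R.level x = R.level y → ∀ p ∈ Φ x, ∀ q ∈ Φ y,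
      dist p q ≤ C * exp (-b * R.gp x y))
    (hlow : ∀ x y, R.level x = R.level y → ∀ p ∈ Φ x, ∀ q ∈ Φ y,
      dist p q ≤ γ * exp (-b * R.level x) → R.level x - 1 / 2 ≤ R.gp x y)
    (hB : R.BoundaryOf lim) (hκ : ∀ f, R.IsRay f → (⋂ i, Φ (f i)) = {κ (lim f)}) {ξ η : B}
    (hne : κ ξ ≠ κ η) :
    γ * exp (-(3 * b / 2)) * exp (-b * (R.gpB lim ξ η).toReal) ≤ dist (κ ξ) (κ η) := by
  have htop : R.gpB lim ξ η ≠ ⊤ :=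
    ne_top_of_le_ne_top ENNReal.ofReal_ne_top (gpB_le_ofReal_log hb hC₀ hC hκ (dist_pos.mpr hne))
  refine mul_exp_neg_le_of_forall_nat hb hγ ENNReal.toReal_nonneg fun n hn => ?_
  obtain ⟨f, hf, rfl⟩ := hB.1 ξ
  obtain ⟨g, hg, rfl⟩ := hB.1 η
  have := hlow (f n) (g n) (by rw [hf.level_eq, hg.level_eq])
    _ (mem_of_iInter_eq_singleton (hκ f hf) n) _ (mem_of_iInter_eq_singleton (hκ g hg) n)
    (by rwa [hf.level_eq])
  rw [hf.level_eq] at this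
  rw [← ENNReal.ofReal_le_iff_le_toReal htop]
  exact (ENNReal.ofReal_le_ofReal this).trans ((le_iSup _ n).trans (gpRay_le_gpB hf hg))

end RootedGraph

theorem AIb_kappa_holder_equiv_general {X M B : Type*} [MetricSpace M]
    [MetricSpace B]
    (R R' : RootedGraph X) (Φ : X → Set M)
    (hvert : R.Vertical) (hΦ : R.IsIndexMap Φ)
    (b γ δ₀ : ℝ) (hb : 0 < b) (hγ : 0 < γ) (hδ₀ : 0 ≤ δ₀)
    (hexp : R.ExpType Φ b δ₀)
    (hA : R.IsAIb R' Φ b γ)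
    (lim : (ℕ → X) → B) (hB : R'.BoundaryOf lim)
    (a c₁ c₂ : ℝ) (ha : 0 < a) (hc₁ : 0 < c₁) (hc₂ : 0 < c₂)
    (hθ : R'.GromovLike lim a c₁ c₂) :
    ∃ κ : B → M,
      (∀ f : ℕ → X, R'.IsRay f → (⋂ i, Φ (f i)) = {κ (lim f)}) ∧
      Function.Injective κ ∧
      Set.range κ = R.attractor Φ ∧
      ∃ C : ℝ, 1 ≤ C ∧ ∀ ξ η : B,
        C⁻¹ * dist ξ η ≤ dist (κ ξ) (κ η) ^ (a / b) ∧
          dist (κ ξ) (κ η) ^ (a / b) ≤ C * dist ξ η := by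
  have hΦ' := hA.isIndexMap hΦ
  obtain ⟨C, hC₀, hC⟩ := hA.exists_dist_le_mul_exp_neg_gp hvert hΦ hexp hb hδ₀ hγ
  obtain ⟨κ, hκ⟩ := RootedGraph.exists_forall_iInter_eq_singleton hb hC₀ hC hΦ' hB
  have hinj := RootedGraph.injective_of_forall_iInter_eq_singleton hγ.le hA.le_gp_of_dist_le hB hκ
  set c := γ * exp (-(3 * b / 2))
  have hc : 0 < c := by positivity
  refine ⟨κ, hκ, hinj, hA.attractor_eq ▸ RootedGraph.range_eq_attractor hΦ' hB hκ,
    max 1 (max (C ^ (a / b) / c₁) (c₂ / c ^ (a / b))), le_max_left _ _, fun ξ η => ?_⟩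
  rcases eq_or_ne ξ η with rfl | hne
  · simp [zero_rpow (div_pos ha hb).ne']
  obtain ⟨hθ₁, hθ₂⟩ := hθ ξ η hne
  obtain ⟨h₁, h₂⟩ := le_rpow_and_rpow_le_of_exp_bounds ha.le hb hc hC₀.le hc₁ hc₂.le
    (RootedGraph.mul_exp_neg_gpB_le_dist hb hγ.le hC₀ hC hA.le_gp_of_dist_le hB hκ (hinj.ne hne))
    (RootedGraph.dist_le_mul_exp_neg_gpB hb hC₀ hC hB hκ ξ η) hθ₁ hθ₂
  constructor
  · rw [inv_mul_le_iff₀ (by positivity)]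
    exact h₁.trans (by gcongr; exact (le_max_right _ _).trans' (le_max_right _ _))
  · exact h₂.trans (by gcongr; exact (le_max_right _ _).trans' (le_max_left _ _))

/-- Theorem 4.5: for the AI_b-graph of an index map of exponential
type-(b), the canonical map `κ : ∂X → K` is a well-defined bijection onto the attractor,
and a Hölder equivalence: `ρ(κξ,κη)^{a/b} ≍ θ_a(ξ,η)`. -/
theorem AIb_kappa_holder_equiv {X M B : Type*} [MetricSpace M] [CompleteSpace M]
    [MetricSpace B]
    (R R' : RootedGraph X) (Φ : X → Set M)
    (hvert : R.Vertical) (hΦ : R.IsIndexMap Φ)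
    (b γ δ₀ : ℝ) (hb : 0 < b) (hγ : 0 < γ) (hδ₀ : 0 ≤ δ₀)
    (hexp : R.ExpType Φ b δ₀)
    (hA : R.IsAIb R' Φ b γ)
    (lim : (ℕ → X) → B) (hB : R'.BoundaryOf lim)
    (a c₁ c₂ : ℝ) (ha : 0 < a) (hc₁ : 0 < c₁) (hc₂ : 0 < c₂)
    (hθ : R'.GromovLike lim a c₁ c₂) :
    ∃ κ : B → M,
      (∀ f : ℕ → X, R'.IsRay f → (⋂ i, Φ (f i)) = {κ (lim f)}) ∧
      Function.Injective κ ∧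
      Set.range κ = R.attractor Φ ∧
      ∃ C : ℝ, 1 ≤ C ∧ ∀ ξ η : B,
        C⁻¹ * dist ξ η ≤ dist (κ ξ) (κ η) ^ (a / b) ∧
          dist (κ ξ) (κ η) ^ (a / b) ≤ C * dist ξ η :=
  AIb_kappa_holder_equiv_general R R' Φ hvert hΦ b γ δ₀ hb hγ hδ₀ hexp hA lim hB a c₁ c₂ ha hc₁ hc₂
    hθ
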